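/- arXiv:math/0702757 — 5 statements merged into one kernel-verified Lean document; each statement's English description precedes it below -/
import Mathlib

section
/- If A and B are subsets of an independent edge set W of a q-uniform hypergraph with |Γ(A)| = |A| + q - 1, |Γ(B)| = |B| + q - 1, and A ∩ B ≠ ∅, then |Γ(A ∪ B)| = |A ∪ B| + q - 1. -/
/-- If A, B ⊆ W (W independent) with |Γ(A)| = |A| + q - 1,
|Γ(B)| = |B| + q - 1 and A ∩ B ≠ ∅, then |Γ(A ∪ B)| = |A ∪ B| + q - 1. -/
theorem stmt_9 {Z D : Type*} [Fintype Z] [Fintype D] [DecidableEq Z] [DecidableEq D]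
    (q : ℕ) (Γ : D → Finset Z) (hq : ∀ d, (Γ d).card = q)
    (W : Finset D)
    (hindep : ∀ C ⊆ W, C.Nonempty → ((C.biUnion Γ).card : ℤ) ≥ C.card + q - 1)
    (A B : Finset D) (hA : A ⊆ W) (hB : B ⊆ W)
    (hAcard : ((A.biUnion Γ).card : ℤ) = A.card + q - 1)
    (hBcard : ((B.biUnion Γ).card : ℤ) = B.card + q - 1)
    (hAB : (A ∩ B).Nonempty) :
    (((A ∪ B).biUnion Γ).card : ℤ) = (A ∪ B).card + q - 1 := by
  have hUeq : (A ∪ B).biUnion Γ = A.biUnion Γ ∪ B.biUnion Γ := by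
    ext z; simp [Finset.mem_biUnion, Finset.mem_union, or_and_right, exists_or]
  have hsub : (A ∩ B).biUnion Γ ⊆ A.biUnion Γ ∩ B.biUnion Γ := by
    intro z hz
    simp only [Finset.mem_biUnion, Finset.mem_inter] at hz ⊢
    obtain ⟨d, ⟨hdA, hdB⟩, hzd⟩ := hz
    exact ⟨⟨d, hdA, hzd⟩, ⟨d, hdB, hzd⟩⟩
  have hcap : ((A.biUnion Γ ∩ B.biUnion Γ).card : ℤ) ≥ (A ∩ B).card + q - 1 := by
    calc ((A.biUnion Γ ∩ B.biUnion Γ).card : ℤ) ≥ ((A ∩ B).biUnion Γ).card := by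
          exact_mod_cast Finset.card_le_card hsub
      _ ≥ (A ∩ B).card + q - 1 :=
          hindep _ (fun x hx => hA (Finset.mem_of_mem_inter_left hx)) hAB
  have hsum : ((A.biUnion Γ ∪ B.biUnion Γ).card : ℤ)
      + ((A.biUnion Γ ∩ B.biUnion Γ).card : ℤ)
      = ((A.biUnion Γ).card : ℤ) + ((B.biUnion Γ).card : ℤ) := by
    exact_mod_cast Finset.card_union_add_card_inter _ _
  have hcards : ((A ∪ B).card : ℤ) + ((A ∩ B).card : ℤ) = A.card + B.card := by
    exact_mod_cast Finset.card_union_add_card_inter A B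
  have hle : (((A ∪ B).biUnion Γ).card : ℤ) ≤ (A ∪ B).card + q - 1 := by
    rw [hUeq]; omega
  have hge := hindep (A ∪ B) (Finset.union_subset hA hB)
    ⟨hAB.choose, Finset.mem_union_left _ (Finset.mem_of_mem_inter_left hAB.choose_spec)⟩
  omega
end

section
/- If W is an independent edge set of a q-uniform hypergraph and a ∈ D is an edge with |Γ(a) ∩ Γ(W)| ≤ 1, then W ∪ {a} is independent. -/
/-- If W is independent and edge a has |Γ(a) ∩ Γ(W)| ≤ 1 (q ≥ 2),
then W ∪ {a} is independent. -/
theorem stmt_11 {Z D : Type*} [Fintype Z] [Fintype D] [DecidableEq Z] [DecidableEq D]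
    (q : ℕ) (hq2 : 2 ≤ q) (Γ : D → Finset Z) (hq : ∀ d, (Γ d).card = q)
    (W : Finset D)
    (hindep : ∀ A ⊆ W, A.Nonempty → ((A.biUnion Γ).card : ℤ) ≥ A.card + q - 1)
    (a : D) (hcap : (Γ a ∩ W.biUnion Γ).card ≤ 1) :
    ∀ A ⊆ insert a W, A.Nonempty → ((A.biUnion Γ).card : ℤ) ≥ A.card + q - 1 := by
  intro A hA hAne
  by_cases ha : a ∈ A
  · set A' := A.erase a with hA'
    have hA'W : A' ⊆ W := by
      intro x hx
      have hxA := Finset.mem_of_mem_erase hx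
      have hxa := Finset.ne_of_mem_erase hx
      rcases Finset.mem_insert.mp (hA hxA) with h | h
      · exact absurd h hxa
      · exact h
    have hAw : A = insert a A' := by
      rw [hA', Finset.insert_erase ha]
    rcases A'.eq_empty_or_nonempty with he | hne
    · have : A = {a} := by rw [hAw, he]; rfl
      rw [this]
      have : ({a} : Finset D).biUnion Γ = Γ a := Finset.singleton_biUnion
      rw [this, hq a]
      simp
    · have hcard : A.card = A'.card + 1 := (Finset.card_erase_add_one ha).symm
      have hbi : A.biUnion Γ = Γ a ∪ A'.biUnion Γ := by
        rw [hAw, Finset.biUnion_insert]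
      have h1 : ((A'.biUnion Γ).card : ℤ) ≥ A'.card + q - 1 := hindep A' hA'W hne
      have hsub : Γ a ∩ A'.biUnion Γ ⊆ Γ a ∩ W.biUnion Γ :=
        Finset.inter_subset_inter_left (Finset.biUnion_subset_biUnion_of_subset_left Γ hA'W)
      have h2 : (Γ a ∩ A'.biUnion Γ).card ≤ 1 :=
        le_trans (Finset.card_le_card hsub) hcap
      have h3 : (Γ a ∪ A'.biUnion Γ).card + (Γ a ∩ A'.biUnion Γ).card
          = (Γ a).card + (A'.biUnion Γ).card := Finset.card_union_add_card_inter _ _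
      have hqa := hq a
      rw [hbi, hcard]
      push_cast
      omega
  · have hAW : A ⊆ W := by
      intro x hx
      rcases Finset.mem_insert.mp (hA hx) with h | h
      · exact absurd (h ▸ hx) ha
      · exact h
    exact hindep A hAW hAne
end

section
/- Let W be an independent edge set of a q-uniform hypergraph and suppose for some a ∈ D \ W the set W ∪ {a} is dependent. Then there exists a unique minimal nonempty subset A ⊆ W ∪ {a} with a ∈ A and |Γ(A)| < |A| + q - 1. -/
/-- If W is independent and W ∪ {a} is dependent (a ∉ W), then there
is a unique minimal nonempty A ⊆ W ∪ {a} with a ∈ A and |Γ(A)| < |A| + q - 1. -/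
theorem stmt_15 {Z D : Type*} [Fintype Z] [Fintype D] [DecidableEq Z] [DecidableEq D]
    (q : ℕ) (Γ : D → Finset Z) (hq : ∀ d, (Γ d).card = q)
    (W : Finset D) (a : D) (ha : a ∉ W)
    (hindep : ∀ A ⊆ W, A.Nonempty → ((A.biUnion Γ).card : ℤ) ≥ A.card + q - 1)
    (hdep : ¬ (∀ A ⊆ insert a W, A.Nonempty → ((A.biUnion Γ).card : ℤ) ≥ A.card + q - 1)) :
    ∃! A : Finset D, A ⊆ insert a W ∧ a ∈ A ∧
      ((A.biUnion Γ).card : ℤ) < A.card + q - 1 ∧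
      ∀ A' ⊆ insert a W, a ∈ A' → ((A'.biUnion Γ).card : ℤ) < A'.card + q - 1 → A ⊆ A' := by
  classical
  push_neg at hdep
  obtain ⟨A₀, hA₀sub, hA₀ne, hA₀lt⟩ := hdep
  -- any violating set contains a
  have hmem : ∀ A ⊆ insert a W, A.Nonempty →
      ((A.biUnion Γ).card : ℤ) < A.card + q - 1 → a ∈ A := by
    intro A hsub hne hlt
    by_contra h
    have hAW : A ⊆ W := by
      intro x hx
      rcases Finset.mem_insert.mp (hsub hx) with h1 | h1
      · exact absurd (h1 ▸ hx) h
      · exact h1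
    exact absurd (hindep A hAW hne) (not_le.mpr hlt)
  -- the finset of violating sets
  set S : Finset (Finset D) := (insert a W).powerset.filter
      (fun A => a ∈ A ∧ ((A.biUnion Γ).card : ℤ) < A.card + q - 1) with hS
  have hSmem : ∀ A : Finset D, A ∈ S ↔
      A ⊆ insert a W ∧ a ∈ A ∧ ((A.biUnion Γ).card : ℤ) < A.card + q - 1 := by
    intro A
    simp [hS, Finset.mem_filter, Finset.mem_powerset, and_assoc]
  have hSne : S.Nonempty :=
    ⟨A₀, (hSmem A₀).mpr ⟨hA₀sub, hmem A₀ hA₀sub hA₀ne hA₀lt, hA₀lt⟩⟩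
  obtain ⟨C, hCS, hCmin⟩ := S.exists_min_image (fun A => A.card) hSne
  obtain ⟨hCsub, hCa, hClt⟩ := (hSmem C).mp hCS
  -- main claim: C is contained in every violating set
  have hmain : ∀ A' ⊆ insert a W, a ∈ A' →
      ((A'.biUnion Γ).card : ℤ) < A'.card + q - 1 → C ⊆ A' := by
    intro A hsub hAa hAlt
    by_contra hnot
    -- C ∩ A is a proper subset of C containing a, hence not violating
    have hinter_sub : C ∩ A ⊆ insert a W := fun x hx =>
      hCsub (Finset.mem_of_mem_inter_left hx)
    have hinter_a : a ∈ C ∩ A := Finset.mem_inter.mpr ⟨hCa, hAa⟩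
    have hinter_ne : C ∩ A ≠ C := by
      intro h
      exact hnot (h ▸ Finset.inter_subset_right)
    have hinter_not : ¬ (((C ∩ A).biUnion Γ).card : ℤ) < (C ∩ A).card + q - 1 := by
      intro hlt
      have hCA_S : C ∩ A ∈ S := (hSmem _).mpr ⟨hinter_sub, hinter_a, hlt⟩
      have h1 : C.card ≤ (C ∩ A).card := hCmin _ hCA_S
      have h2 : (C ∩ A).card ≤ C.card := Finset.card_le_card Finset.inter_subset_left
      exact hinter_ne (Finset.eq_of_subset_of_card_le Finset.inter_subset_left h1)
    have hinter_ge : (((C ∩ A).biUnion Γ).card : ℤ) ≥ (C ∩ A).card + q - 1 :=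
      le_of_not_gt hinter_not
    -- the union minus a is a nonempty independent subset of W
    set Y : Finset D := (C ∪ A).erase a with hY
    have hYW : Y ⊆ W := by
      intro x hx
      have hxa : x ≠ a := Finset.ne_of_mem_erase hx
      have hx' : x ∈ C ∪ A := Finset.mem_of_mem_erase hx
      rcases Finset.mem_union.mp hx' with h1 | h1
      · rcases Finset.mem_insert.mp (hCsub h1) with h2 | h2
        · exact absurd h2 hxa
        · exact h2
      · rcases Finset.mem_insert.mp (hsub h1) with h2 | h2
        · exact absurd h2 hxa
        · exact h2
    have hYne : Y.Nonempty := by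
      obtain ⟨c, hcC, hcA⟩ := Finset.not_subset.mp hnot
      refine ⟨c, Finset.mem_erase.mpr ⟨?_, Finset.mem_union_left _ hcC⟩⟩
      intro h
      exact hcA (h ▸ hAa)
    have hYcard : (Y.card : ℤ) = (C ∪ A).card - 1 := by
      have : Y.card = (C ∪ A).card - 1 :=
        Finset.card_erase_of_mem (Finset.mem_union.mpr (Or.inl hCa))
      have hpos : 1 ≤ (C ∪ A).card :=
        Finset.card_pos.mpr ⟨a, Finset.mem_union.mpr (Or.inl hCa)⟩
      omega
    have hYind : ((Y.biUnion Γ).card : ℤ) ≥ Y.card + q - 1 := hindep Y hYW hYne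
    have hYsub : Y.biUnion Γ ⊆ (C ∪ A).biUnion Γ :=
      Finset.biUnion_subset_biUnion_of_subset_left Γ (Finset.erase_subset _ _)
    have hunion_ge : (((C ∪ A).biUnion Γ).card : ℤ) ≥ (C ∪ A).card + q - 2 := by
      have := Finset.card_le_card hYsub
      have h2 : ((Y.biUnion Γ).card : ℤ) ≤ ((C ∪ A).biUnion Γ).card := by exact_mod_cast this
      linarith
    -- submodularity
    have hsubmod : (((C ∩ A).biUnion Γ).card : ℤ) + ((C ∪ A).biUnion Γ).card
        ≤ (C.biUnion Γ).card + (A.biUnion Γ).card := by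
      have hu : (C ∪ A).biUnion Γ = C.biUnion Γ ∪ A.biUnion Γ := by
        ext x
        simp only [Finset.mem_biUnion, Finset.mem_union]
        constructor
        · rintro ⟨d, hd | hd, hx⟩
          · exact Or.inl ⟨d, hd, hx⟩
          · exact Or.inr ⟨d, hd, hx⟩
        · rintro (⟨d, hd, hx⟩ | ⟨d, hd, hx⟩)
          · exact ⟨d, Or.inl hd, hx⟩
          · exact ⟨d, Or.inr hd, hx⟩
      have hi : (C ∩ A).biUnion Γ ⊆ C.biUnion Γ ∩ A.biUnion Γ := by
        intro x hx
        obtain ⟨d, hd, hxd⟩ := Finset.mem_biUnion.mp hx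
        obtain ⟨hd1, hd2⟩ := Finset.mem_inter.mp hd
        exact Finset.mem_inter.mpr ⟨Finset.mem_biUnion.mpr ⟨d, hd1, hxd⟩,
          Finset.mem_biUnion.mpr ⟨d, hd2, hxd⟩⟩
      have h1 : ((C ∩ A).biUnion Γ).card ≤ (C.biUnion Γ ∩ A.biUnion Γ).card :=
        Finset.card_le_card hi
      have h2 : (C.biUnion Γ ∪ A.biUnion Γ).card + (C.biUnion Γ ∩ A.biUnion Γ).card
          = (C.biUnion Γ).card + (A.biUnion Γ).card :=
        Finset.card_union_add_card_inter _ _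
      rw [hu]
      push_cast
      omega
    have hcardCA : ((C ∪ A).card : ℤ) + (C ∩ A).card = C.card + A.card := by
      have := Finset.card_union_add_card_inter C A
      exact_mod_cast this
    linarith
  refine ⟨C, ⟨hCsub, hCa, hClt, hmain⟩, ?_⟩
  rintro A ⟨hAsub, hAa, hAlt, hAmin⟩
  exact Finset.Subset.antisymm (hAmin C hCsub hCa hClt) (hmain A hAsub hAa hAlt)
end

section
/- Greedy exchange step for hypergraph matroids: if A and B are independent edge sets of a q-uniform hypergraph with |A| < |B|, then there exists b ∈ B \ A such that A ∪ {b} is independent. -/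
open Finset

/-- Greedy exchange step: if A and B are independent with |A| < |B|,
then some b ∈ B \ A keeps A ∪ {b} independent. -/
theorem stmt_18 {Z D : Type*} [Fintype Z] [Fintype D] [DecidableEq Z] [DecidableEq D]
    (q : ℕ) (Γ : D → Finset Z) (hq : ∀ d, (Γ d).card = q)
    (A B : Finset D)
    (hA : ∀ S ⊆ A, S.Nonempty → ((S.biUnion Γ).card : ℤ) ≥ S.card + q - 1)
    (hB : ∀ S ⊆ B, S.Nonempty → ((S.biUnion Γ).card : ℤ) ≥ S.card + q - 1)
    (hcard : A.card < B.card) :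
    ∃ b ∈ B \ A,
      ∀ S ⊆ insert b A, S.Nonempty → ((S.biUnion Γ).card : ℤ) ≥ S.card + q - 1 := by
  classical
  by_contra hcon
  push_neg at hcon
  -- natural-number versions of independence
  have hA' : ∀ S ⊆ A, S.Nonempty → S.card + q ≤ (S.biUnion Γ).card + 1 := by
    intro S hS hne
    have := hA S hS hne
    omega
  have hB' : ∀ S ⊆ B, S.Nonempty → S.card + q ≤ (S.biUnion Γ).card + 1 := by
    intro S hS hne
    have := hB S hS hne
    omega
  -- tight sets
  set Tight : Finset D → Prop :=
    fun T => T ⊆ A ∧ T.Nonempty ∧ (T.biUnion Γ).card + 1 = T.card + q with hTight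
  have tight_union : ∀ T1 T2, Tight T1 → Tight T2 → (T1 ∩ T2).Nonempty →
      Tight (T1 ∪ T2) := by
    intro T1 T2 h1 h2 hne
    obtain ⟨h1A, h1ne, h1t⟩ := h1
    obtain ⟨h2A, h2ne, h2t⟩ := h2
    have hsubA : T1 ∪ T2 ⊆ A := union_subset h1A h2A
    have hU : (T1 ∪ T2).biUnion Γ = T1.biUnion Γ ∪ T2.biUnion Γ := by
      ext x
      simp only [mem_biUnion, mem_union]
      constructor
      · rintro ⟨a, ha | ha, hx⟩
        · exact Or.inl ⟨a, ha, hx⟩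
        · exact Or.inr ⟨a, ha, hx⟩
      · rintro (⟨a, ha, hx⟩ | ⟨a, ha, hx⟩)
        · exact ⟨a, Or.inl ha, hx⟩
        · exact ⟨a, Or.inr ha, hx⟩
    have hcardU : (T1.biUnion Γ ∪ T2.biUnion Γ).card + (T1.biUnion Γ ∩ T2.biUnion Γ).card
        = (T1.biUnion Γ).card + (T2.biUnion Γ).card := card_union_add_card_inter _ _
    have hint : (T1 ∩ T2).biUnion Γ ⊆ T1.biUnion Γ ∩ T2.biUnion Γ :=
      subset_inter (biUnion_subset_biUnion_of_subset_left _ inter_subset_left)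
        (biUnion_subset_biUnion_of_subset_left _ inter_subset_right)
    have hintcard : ((T1 ∩ T2).biUnion Γ).card ≤ (T1.biUnion Γ ∩ T2.biUnion Γ).card :=
      card_le_card hint
    have hInt := hA' (T1 ∩ T2) (inter_subset_left.trans h1A) hne
    have hUnion := hA' (T1 ∪ T2) hsubA (h1ne.mono subset_union_left)
    rw [hU] at hUnion
    have hcards : (T1 ∪ T2).card + (T1 ∩ T2).card = T1.card + T2.card :=
      card_union_add_card_inter _ _
    refine ⟨hsubA, h1ne.mono subset_union_left, ?_⟩
    rw [hU]
    omega
  -- for each b ∈ B \ A there is a tight set covering Γ b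
  have exT : ∀ b ∈ B \ A, ∃ T, Tight T ∧ Γ b ⊆ T.biUnion Γ := by
    intro b hb
    obtain ⟨hbB, hbA⟩ := mem_sdiff.mp hb
    obtain ⟨S, hSsub, hSne, hSbad⟩ := hcon b hb
    have hSbad' : (S.biUnion Γ).card + 2 ≤ S.card + q := by omega
    have hbS : b ∈ S := by
      by_contra hbS
      have hSA : S ⊆ A := by
        intro x hx
        rcases mem_insert.mp (hSsub hx) with h | h
        · exact absurd (h ▸ hx) hbS
        · exact h
      have := hA' S hSA hSne
      omega
    set T := S.erase b with hT
    have hSins : S = insert b T := by rw [hT, insert_erase hbS]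
    have hTA : T ⊆ A := by
      intro x hx
      have hxS : x ∈ S := erase_subset _ _ hx
      have hxb : x ≠ b := ne_of_mem_erase hx
      rcases mem_insert.mp (hSsub hxS) with h | h
      · exact absurd h hxb
      · exact h
    have hTne : T.Nonempty := by
      rcases T.eq_empty_or_nonempty with h | h
      · exfalso
        have hSb : S = {b} := by rw [hSins, h]; simp
        have hGb : (S.biUnion Γ).card = q := by rw [hSb, singleton_biUnion, hq b]
        have hS1 : S.card = 1 := by rw [hSb]; simp
        omega
      · exact h
    have hTsubS : T.biUnion Γ ⊆ S.biUnion Γ :=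
      biUnion_subset_biUnion_of_subset_left _ (erase_subset _ _)
    have hTlow := hA' T hTA hTne
    have hScard : S.card = T.card + 1 := by
      rw [hSins, card_insert_of_notMem (notMem_erase _ _)]
    have hTcard : (T.biUnion Γ).card ≤ (S.biUnion Γ).card := card_le_card hTsubS
    have heq : T.biUnion Γ = S.biUnion Γ :=
      eq_of_subset_of_card_le hTsubS (by omega)
    refine ⟨T, ⟨hTA, hTne, by omega⟩, ?_⟩
    rw [heq]
    exact subset_biUnion_of_mem Γ hbS
  -- choose a maximum-cardinality tight cover for each b
  have exM : ∀ b : D, ∃ T, b ∈ B \ A →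
      ((Tight T ∧ Γ b ⊆ T.biUnion Γ) ∧
        ∀ T', Tight T' → Γ b ⊆ T'.biUnion Γ → T'.card ≤ T.card) := by
    intro b
    by_cases hb : b ∈ B \ A
    · obtain ⟨T0, hT0⟩ := exT b hb
      have hsne : (Finset.univ.filter (fun T : Finset D =>
          Tight T ∧ Γ b ⊆ T.biUnion Γ)).Nonempty :=
        ⟨T0, mem_filter.mpr ⟨mem_univ _, hT0⟩⟩
      obtain ⟨T, hTs, hmax⟩ := Finset.exists_max_image _ Finset.card hsne
      simp only [mem_filter, mem_univ, true_and] at hTs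
      exact ⟨T, fun _ => ⟨hTs, fun T' h1 h2 =>
        hmax T' (mem_filter.mpr ⟨mem_univ _, h1, h2⟩)⟩⟩
    · exact ⟨∅, fun h => absurd h hb⟩
  choose M hM using exM
  -- maximal tight covers are equal or disjoint
  have Meq : ∀ b ∈ B \ A, ∀ b' ∈ B \ A, (M b ∩ M b').Nonempty → M b = M b' := by
    intro b hb b' hb' hne
    obtain ⟨⟨htb, hgb⟩, hmaxb⟩ := hM b hb
    obtain ⟨⟨htb', hgb'⟩, hmaxb'⟩ := hM b' hb'
    have hU : Tight (M b ∪ M b') := tight_union _ _ htb htb' hne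
    have hgU : Γ b ⊆ (M b ∪ M b').biUnion Γ :=
      hgb.trans (biUnion_subset_biUnion_of_subset_left _ subset_union_left)
    have hgU' : Γ b' ⊆ (M b ∪ M b').biUnion Γ :=
      hgb'.trans (biUnion_subset_biUnion_of_subset_left _ subset_union_right)
    have h1 : M b = M b ∪ M b' :=
      eq_of_subset_of_card_le subset_union_left (hmaxb _ hU hgU)
    have h2 : M b' = M b ∪ M b' :=
      eq_of_subset_of_card_le subset_union_right (hmaxb' _ hU hgU')
    exact h1.trans h2.symm
  -- counting
  set I := (B \ A).image M with hI
  have hsum : (B \ A).card = ∑ M₀ ∈ I, ((B \ A).filter (fun b => M b = M₀)).card :=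
    Finset.card_eq_sum_card_image M (B \ A)
  have fiber_bound : ∀ M₀ ∈ I, ((B \ A).filter (fun b => M b = M₀)).card ≤ (M₀ \ B).card := by
    intro M₀ hM₀
    obtain ⟨b₀, hb₀, hMb₀⟩ := mem_image.mp hM₀
    obtain ⟨⟨htb₀, hgb₀⟩, _⟩ := hM b₀ hb₀
    have htM₀ : Tight M₀ := hMb₀ ▸ htb₀
    obtain ⟨hM₀A, hM₀ne, hM₀t⟩ := htM₀
    set F := (B \ A).filter (fun b => M b = M₀) with hF
    set C := F ∪ (M₀ ∩ B) with hC
    have hCB : C ⊆ B := by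
      intro x hx
      rcases mem_union.mp hx with h | h
      · exact (mem_sdiff.mp (mem_filter.mp h).1).1
      · exact (mem_inter.mp h).2
    have hCne : C.Nonempty :=
      ⟨b₀, mem_union_left _ (mem_filter.mpr ⟨hb₀, hMb₀⟩)⟩
    have hCG : C.biUnion Γ ⊆ M₀.biUnion Γ := by
      apply biUnion_subset.mpr
      intro x hx
      rcases mem_union.mp hx with h | h
      · obtain ⟨hx1, hx2⟩ := mem_filter.mp h
        obtain ⟨⟨_, hgx⟩, _⟩ := hM x hx1
        exact hx2 ▸ hgx
      · exact subset_biUnion_of_mem Γ (mem_inter.mp h).1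
    have h1 := hB' C hCB hCne
    have h2 : (C.biUnion Γ).card ≤ (M₀.biUnion Γ).card := card_le_card hCG
    have hdisj : Disjoint F (M₀ ∩ B) := by
      rw [disjoint_left]
      intro x hx hx'
      exact (mem_sdiff.mp (mem_filter.mp hx).1).2 (hM₀A (mem_inter.mp hx').1)
    have hCcard : C.card = F.card + (M₀ ∩ B).card := card_union_of_disjoint hdisj
    have hM₀card : (M₀ ∩ B).card + (M₀ \ B).card = M₀.card := card_inter_add_card_sdiff _ _
    omega
  have hdisjI : ∀ x ∈ I, ∀ y ∈ I, x ≠ y → Disjoint (x \ B) (y \ B) := by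
    intro x hx y hy hxy
    obtain ⟨b, hb, hbx⟩ := mem_image.mp hx
    obtain ⟨b', hb', hby⟩ := mem_image.mp hy
    by_contra hnd
    obtain ⟨z, hz⟩ := not_disjoint_iff_nonempty_inter.mp hnd
    have hzin : z ∈ M b ∩ M b' := by
      rw [hbx, hby]
      exact mem_inter.mpr ⟨(mem_sdiff.mp (mem_inter.mp hz).1).1,
        (mem_sdiff.mp (mem_inter.mp hz).2).1⟩
    exact hxy (hbx ▸ hby ▸ Meq b hb b' hb' ⟨z, hzin⟩)
  have hbiU : (I.biUnion (fun M₀ => M₀ \ B)).card = ∑ M₀ ∈ I, (M₀ \ B).card :=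
    card_biUnion hdisjI
  have hsub : I.biUnion (fun M₀ => M₀ \ B) ⊆ A \ B := by
    apply biUnion_subset.mpr
    intro M₀ hM₀
    obtain ⟨b, hb, hbM⟩ := mem_image.mp hM₀
    obtain ⟨⟨⟨hMA, _, _⟩, _⟩, _⟩ := hM b hb
    intro x hx
    obtain ⟨hx1, hx2⟩ := mem_sdiff.mp hx
    exact mem_sdiff.mpr ⟨(hbM ▸ hMA) hx1, hx2⟩
  have hsum2 : ∑ M₀ ∈ I, (M₀ \ B).card ≤ (A \ B).card := by
    rw [← hbiU]
    exact card_le_card hsub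
  have hfib_sum : ∑ M₀ ∈ I, ((B \ A).filter (fun b => M b = M₀)).card
      ≤ ∑ M₀ ∈ I, (M₀ \ B).card :=
    Finset.sum_le_sum fiber_bound
  have hBA : (B \ A).card ≤ (A \ B).card := by omega
  have h1 : (B \ A).card + (B ∩ A).card = B.card := card_sdiff_add_card_inter _ _
  have h2 : (A \ B).card + (A ∩ B).card = A.card := card_sdiff_add_card_inter _ _
  have h3 : (A ∩ B).card = (B ∩ A).card := by rw [inter_comm]
  omega
end

section
/- Submodular function matroid: let φ : 2^D → ℤ be monotone (A ⊆ B → φ(A) ≤ φ(B)), submodular (φ(A) + φ(B) ≥ φ(A∪B) + φ(A∩B)) with φ(∅) = 0. Then the family I = {A ⊆ D : φ(A') ≥ |A'| for all A' ⊆ A} satisfies the matroid axioms: it contains ∅, is downward closed, and satisfies the exchange property. -/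
/-- For a monotone submodular φ : 2^D → ℤ with φ(∅) = 0, the family
I = {A : φ(A') ≥ |A'| for all A' ⊆ A} contains ∅, is downward closed, and
satisfies the exchange property. -/
theorem stmt_19 {D : Type*} [Fintype D] [DecidableEq D]
    (φ : Finset D → ℤ) (hφ0 : φ ∅ = 0)
    (hmono : ∀ A B : Finset D, A ⊆ B → φ A ≤ φ B)
    (hsub : ∀ A B : Finset D, φ A + φ B ≥ φ (A ∪ B) + φ (A ∩ B)) :
    (∀ A' ⊆ (∅ : Finset D), (A'.card : ℤ) ≤ φ A') ∧
    (∀ A B : Finset D, (∀ A' ⊆ B, (A'.card : ℤ) ≤ φ A') → A ⊆ B →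
      ∀ A' ⊆ A, (A'.card : ℤ) ≤ φ A') ∧
    (∀ A B : Finset D, (∀ A' ⊆ A, (A'.card : ℤ) ≤ φ A') →
      (∀ A' ⊆ B, (A'.card : ℤ) ≤ φ A') → A.card < B.card →
      ∃ b ∈ B \ A, ∀ A' ⊆ insert b A, (A'.card : ℤ) ≤ φ A') := by
  refine ⟨?_, ?_, ?_⟩
  · intro A' hA'
    simp [Finset.subset_empty.mp hA', hφ0]
  · intro A B hB hAB A' hA'
    exact hB A' (hA'.trans hAB)
  · intro A B hA hB hcard
    by_contra hcon
    push_neg at hcon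
    -- hcon : ∀ b ∈ B \ A, ∃ A' ⊆ insert b A, φ A' < A'.card
    have key : ∀ b ∈ B \ A, ∃ Zb : Finset D, Zb ⊆ A ∧ φ (insert b Zb) ≤ (Zb.card : ℤ) := by
      intro b hb
      obtain ⟨A', hA'sub, hA'lt⟩ := hcon b hb
      have hbA : b ∉ A := (Finset.mem_sdiff.mp hb).2
      have hbA' : b ∈ A' := by
        by_contra hb'
        have hsubA : A' ⊆ A := by
          intro x hx
          rcases Finset.mem_insert.mp (hA'sub hx) with h | h
          · exact absurd (h ▸ hx) hb'
          · exact h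
        exact absurd (hA A' hsubA) (not_le.mpr hA'lt)
      refine ⟨A'.erase b, ?_, ?_⟩
      · intro x hx
        rcases Finset.mem_insert.mp (hA'sub (Finset.mem_of_mem_erase hx)) with h | h
        · exact absurd h (Finset.ne_of_mem_erase hx)
        · exact h
      · rw [Finset.insert_erase hbA']
        have hc : (A'.erase b).card = A'.card - 1 := Finset.card_erase_of_mem hbA'
        have h1 : 1 ≤ A'.card := Finset.card_pos.mpr ⟨b, hbA'⟩
        omega
    choose! Z hZA hZφ using key
    have main : ∀ S : Finset D, S ⊆ B \ A →
        φ ((S.biUnion Z) ∪ S) ≤ ((S.biUnion Z).card : ℤ) := by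
      intro S
      induction S using Finset.induction_on with
      | empty => intro _; simp [hφ0]
      | @insert b S hbS ih =>
        intro hins
        have hbBA : b ∈ B \ A := hins (Finset.mem_insert_self b S)
        have hSsub : S ⊆ B \ A := fun x hx => hins (Finset.mem_insert_of_mem hx)
        have hC := ih hSsub
        set C := S.biUnion Z with hCdef
        have hCA : C ⊆ A := by
          intro x hx
          obtain ⟨c, hc, hx⟩ := Finset.mem_biUnion.mp hx
          exact hZA c (hSsub hc) hx
        have hbA : b ∉ A := (Finset.mem_sdiff.mp hbBA).2
        have hbX : b ∉ C ∪ S := by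
          simp only [Finset.mem_union]
          push_neg
          exact ⟨fun h => hbA (hCA h), hbS⟩
        have hbi : (insert b S).biUnion Z = Z b ∪ C := Finset.biUnion_insert
        have hset : (Z b ∪ C) ∪ insert b S = (C ∪ S) ∪ insert b (Z b) := by
          ext x
          simp only [Finset.mem_union, Finset.mem_insert]
          tauto
        have hSA : ∀ x ∈ S, x ∉ A := fun x hx => (Finset.mem_sdiff.mp (hSsub hx)).2
        have hinter : (C ∪ S) ∩ insert b (Z b) = C ∩ Z b := by
          ext x
          simp only [Finset.mem_inter, Finset.mem_union, Finset.mem_insert]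
          constructor
          · rintro ⟨hcs, hx⟩
            rcases hx with rfl | hx
            · exact absurd hcs (by simpa using hbX)
            · rcases hcs with h | h
              · exact ⟨h, hx⟩
              · exact absurd (hZA b hbBA hx) (hSA x h)
          · rintro ⟨h1, h2⟩
            exact ⟨Or.inl h1, Or.inr h2⟩
        have hsm := hsub (C ∪ S) (insert b (Z b))
        rw [hinter] at hsm
        have hZb := hZφ b hbBA
        have hIA : (((C ∩ Z b).card : ℤ)) ≤ φ (C ∩ Z b) :=
          hA _ ((Finset.inter_subset_left).trans hCA)
        have hcards : (C ∪ Z b).card + (C ∩ Z b).card = C.card + (Z b).card :=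
          Finset.card_union_add_card_inter C (Z b)
        rw [hbi, hset]
        have hcu : ((Z b ∪ C).card : ℤ) = ((C ∪ Z b).card : ℤ) := by
          rw [Finset.union_comm]
        rw [hcu]
        have : ((C ∪ Z b).card : ℤ) + ((C ∩ Z b).card : ℤ) = (C.card : ℤ) + ((Z b).card : ℤ) := by
          exact_mod_cast congrArg (Nat.cast : ℕ → ℤ) hcards
        linarith
    have hmain := main (B \ A) (subset_refl _)
    set C := (B \ A).biUnion Z with hCdef
    have hCA : C ⊆ A := by
      intro x hx
      obtain ⟨c, hc, hx⟩ := Finset.mem_biUnion.mp hx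
      exact hZA c hc hx
    have h4 := hsub (C ∪ (B \ A)) B
    have h5 : φ B ≤ φ ((C ∪ (B \ A)) ∪ B) := hmono _ _ Finset.subset_union_right
    have h6 : (((C ∪ (B \ A)) ∩ B).card : ℤ) ≤ φ ((C ∪ (B \ A)) ∩ B) :=
      hB _ Finset.inter_subset_right
    -- so φ((C∪(B\A)) ∩ B) ≤ φ(C∪(B\A)) ≤ |C|
    have h7 : (((C ∪ (B \ A)) ∩ B).card : ℤ) ≤ (C.card : ℤ) := by linarith
    -- card computations
    have hsubint : (C ∩ B) ∪ (B \ A) ⊆ (C ∪ (B \ A)) ∩ B := by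
      intro x hx
      simp only [Finset.mem_union, Finset.mem_inter, Finset.mem_sdiff] at hx ⊢
      tauto
    have h8 : ((C ∩ B) ∪ (B \ A)).card ≤ ((C ∪ (B \ A)) ∩ B).card :=
      Finset.card_le_card hsubint
    have hdisj : Disjoint (C ∩ B) (B \ A) := by
      rw [Finset.disjoint_left]
      intro x hx hx'
      exact (Finset.mem_sdiff.mp hx').2 (hCA (Finset.mem_inter.mp hx).1)
    have h9 : ((C ∩ B) ∪ (B \ A)).card = (C ∩ B).card + (B \ A).card :=
      Finset.card_union_of_disjoint hdisj
    have h10 : (C ∩ B).card + (C \ B).card = C.card :=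
      Finset.card_inter_add_card_sdiff C B
    have h11 : (C \ B).card ≤ (A \ B).card :=
      Finset.card_le_card (Finset.sdiff_subset_sdiff hCA (subset_refl _))
    have h12 : (B \ A).card + (B ∩ A).card = B.card :=
      Finset.card_sdiff_add_card_inter B A
    have h13 : (A \ B).card + (A ∩ B).card = A.card :=
      Finset.card_sdiff_add_card_inter A B
    have h14 : (B ∩ A).card = (A ∩ B).card := by rw [Finset.inter_comm]
    omega
end
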